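/- arXiv:math/0311041 — 2 statements merged into one kernel-verified Lean document; each statement's English description precedes it below -/
import Mathlib

section
/- If X is a C-maximal set of vertices of a graph G, and C₁, C₂ are distinct classes of the partition C(X) each having at least two elements, then the bipartite graph induced between C₁ and C₂ is complete or empty. -/
/-- For `u, v ∉ X`, `u ≡_X v` iff `u` and `v` have the same neighborhood inside `X`. -/
def SimpleGraph.EqOn {V : Type*} (G : SimpleGraph V) (X : Set V) (u v : V) : Prop :=
  ∀ x ∈ X, (G.Adj u x ↔ G.Adj v x)

/-- The `≡_X`-class of a vertex `u ∉ X`, as a subset of the complement of `X`. -/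
def SimpleGraph.classOf {V : Type*} (G : SimpleGraph V) (X : Set V) (u : V) : Set V :=
  {v | v ∉ X ∧ G.EqOn X u v}

/-- The partition `C(X)` of the complement of `X` into `≡_X`-classes. -/
def SimpleGraph.classes {V : Type*} (G : SimpleGraph V) (X : Set V) : Set (Set V) :=
  {S | ∃ u, u ∉ X ∧ S = G.classOf X u}

/-- `X` is `C`-maximal if adding a single vertex never increases the number of classes. -/
def SimpleGraph.CMaximal {V : Type*} (G : SimpleGraph V) (X : Set V) : Prop :=
  ∀ u ∉ X, (G.classes (X ∪ {u})).ncard ≤ (G.classes X).ncard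

namespace SimpleGraph

variable {V : Type*} (G : SimpleGraph V) {X : Set V} {u v w : V}

lemma eqOn_refl (u : V) : G.EqOn X u u := fun _ _ => Iff.rfl

lemma eqOn_symm (h : G.EqOn X u v) : G.EqOn X v u := fun x hx => (h x hx).symm

lemma eqOn_trans (h1 : G.EqOn X u v) (h2 : G.EqOn X v w) : G.EqOn X u w :=
  fun x hx => (h1 x hx).trans (h2 x hx)

lemma eqOn_mono (h : G.EqOn (X ∪ {u}) v w) : G.EqOn X v w :=
  fun x hx => h x (Or.inl hx)

lemma mem_classOf_self (hu : u ∉ X) : u ∈ G.classOf X u := ⟨hu, G.eqOn_refl u⟩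

lemma not_mem_of_mem_classOf (hv : v ∈ G.classOf X u) : v ∉ X := hv.1

lemma classOf_eq_of_mem (hv : v ∈ G.classOf X u) : G.classOf X v = G.classOf X u := by
  obtain ⟨hvX, hequv⟩ := hv
  ext w
  exact ⟨fun hw => ⟨hw.1, G.eqOn_trans hequv hw.2⟩,
         fun hw => ⟨hw.1, G.eqOn_trans (G.eqOn_symm hequv) hw.2⟩⟩

/-- Key counting lemma: if adding `u` splits some other class while `u`'s own class
still has another element, then the number of classes strictly increases. -/
lemma key_split [Fintype V] (hu : u ∉ X) (hw : w ∈ G.classOf X u) (hwu : w ≠ u)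
    {a a' : V} (ha : a ∉ X) (ha' : a' ∉ X)
    (hcl : G.classOf X a = G.classOf X a') (hau : a ∉ G.classOf X u)
    (hA : G.Adj a u) (hA' : ¬ G.Adj a' u) :
    (G.classes X).ncard < (G.classes (X ∪ {u})).ncard := by
  have hane : a ≠ u := G.ne_of_adj hA
  have ha'ne : a' ≠ u := by
    rintro rfl
    apply hau
    rw [← hcl]
    exact G.mem_classOf_self ha
  have haXu : a ∉ X ∪ {u} := by simp [ha, hane]
  have ha'Xu : a' ∉ X ∪ {u} := by simp [ha', ha'ne]
  -- every old class has an element other than u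
  have hrep : ∀ C ∈ G.classes X, (C \ {u}).Nonempty := by
    rintro C ⟨v, hv, rfl⟩
    by_cases hvu : v = u
    · exact ⟨w, by subst hvu; exact hw, hwu⟩
    · exact ⟨v, G.mem_classOf_self hv, hvu⟩
  classical
  set F : Set V → Set V := fun C =>
    if h : (C \ {u}).Nonempty then G.classOf (X ∪ {u}) h.choose else ∅ with hF
  -- F C is the new class of the representative
  have hFdef : ∀ C ∈ G.classes X, ∃ r ∈ C \ {u}, F C = G.classOf (X ∪ {u}) r := by
    intro C hC
    have h := hrep C hC
    exact ⟨h.choose, h.choose_spec, by simp [hF, h]⟩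
  have hmemXC : ∀ C ∈ G.classes X, ∀ r ∈ C, G.classOf X r = C := by
    rintro C ⟨v, hv, rfl⟩ r hr
    exact G.classOf_eq_of_mem hr
  -- pull back: if F C is the new class of v, then v ∈ C
  have hback : ∀ C ∈ G.classes X, ∀ v, v ∉ X ∪ {u} →
      F C = G.classOf (X ∪ {u}) v → v ∈ C := by
    intro C hC v hv hFv
    obtain ⟨r, hr, hFr⟩ := hFdef C hC
    have hveq : v ∈ G.classOf (X ∪ {u}) r := by
      rw [← hFr, hFv]; exact G.mem_classOf_self hv
    have : v ∈ G.classOf X r := ⟨fun hx => hveq.1 (Or.inl hx), G.eqOn_mono hveq.2⟩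
    rwa [hmemXC C hC r hr.1] at this
  -- the two new classes of a and a'
  set S : Set V := G.classOf (X ∪ {u}) a with hS
  set S' : Set V := G.classOf (X ∪ {u}) a' with hS'
  have hSS' : S ≠ S' := by
    intro h
    have : a' ∈ S := h ▸ G.mem_classOf_self ha'Xu
    exact hA' ((this.2 u (Or.inr rfl)).mp hA)
  have hC₁ : G.classOf X a ∈ G.classes X := ⟨a, ha, rfl⟩
  -- the missing target
  set t : Set V := if F (G.classOf X a) = S then S' else S with ht
  have htmem : t ∈ G.classes (X ∪ {u}) := by
    rw [ht]
    split
    · exact ⟨a', ha'Xu, rfl⟩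
    · exact ⟨a, haXu, rfl⟩
  have htnot : ∀ C ∈ G.classes X, F C ≠ t := by
    intro C hC hFt
    have hCeq : C = G.classOf X a := by
      rw [ht] at hFt
      split at hFt
      · have := hback C hC a' ha'Xu hFt
        rw [← hmemXC C hC a' this, hcl]
      · have := hback C hC a haXu hFt
        rw [← hmemXC C hC a this]
    rw [ht] at hFt
    split at hFt
    · rename_i h; rw [hCeq] at hFt; rw [hFt] at h; exact hSS' h.symm
    · rename_i h; rw [hCeq] at hFt; exact h hFt
  have hmaps : ∀ C ∈ G.classes X, F C ∈ G.classes (X ∪ {u}) \ {t} := by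
    intro C hC
    obtain ⟨r, hr, hFr⟩ := hFdef C hC
    have hrX : r ∉ X := by
      have := hmemXC C hC r hr.1
      rw [← this] at hr
      exact hr.1.1
    have hru : r ≠ u := fun h => hr.2 (h ▸ rfl)
    have hrXu : r ∉ X ∪ {u} := by simp [hrX, hru]
    exact ⟨hFr ▸ ⟨r, hrXu, rfl⟩, htnot C hC⟩
  have hinj : Set.InjOn F (G.classes X) := by
    intro C hC C' hC' hEq
    obtain ⟨r, hr, hFr⟩ := hFdef C hC
    obtain ⟨r', hr', hFr'⟩ := hFdef C' hC'
    have : r' ∈ G.classOf (X ∪ {u}) r := by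
      have hr'X : r' ∉ X := by
        have := hmemXC C' hC' r' hr'.1
        rw [← this] at hr'; exact hr'.1.1
      have hr'u : r' ≠ u := fun h => hr'.2 (h ▸ rfl)
      have hr'Xu : r' ∉ X ∪ {u} := by simp [hr'X, hr'u]
      rw [← hFr, hEq, hFr']
      exact G.mem_classOf_self hr'Xu
    have hr'C : r' ∈ G.classOf X r := ⟨by
        have := hmemXC C' hC' r' hr'.1
        rw [← this] at hr'; exact hr'.1.1, G.eqOn_mono this.2⟩
    rw [hmemXC C hC r hr.1] at hr'C
    rw [← hmemXC C hC r' hr'C, ← hmemXC C' hC' r' hr'.1]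
  have hfin : (G.classes (X ∪ {u})).Finite := Set.toFinite _
  calc (G.classes X).ncard ≤ (G.classes (X ∪ {u}) \ {t}).ncard :=
        Set.ncard_le_ncard_of_injOn F hmaps hinj hfin.diff
    _ < (G.classes (X ∪ {u})).ncard := by
        apply Set.ncard_lt_ncard _ hfin
        exact ⟨Set.diff_subset, fun h => (h htmem).2 rfl⟩

/-- Homogeneity: under C-maximality, a whole class looks the same towards any vertex
outside it whose own class has at least two elements. -/
lemma homog [Fintype V] (hX : G.CMaximal X) (hu : u ∉ X) (hw : w ∈ G.classOf X u)
    (hwu : w ≠ u) {a a' : V} (ha : a ∉ X) (ha' : a' ∉ X)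
    (hcl : G.classOf X a = G.classOf X a') (hau : a ∉ G.classOf X u) :
    (G.Adj a u ↔ G.Adj a' u) := by
  have ha'u : a' ∉ G.classOf X u := by
    intro h
    apply hau
    rw [← G.classOf_eq_of_mem h, ← hcl]
    exact G.mem_classOf_self ha
  by_contra hiff
  have hle := hX u hu
  rcases Classical.em (G.Adj a u) with hA | hA
  · have hA' : ¬ G.Adj a' u := fun h => hiff ⟨fun _ => h, fun _ => hA⟩
    exact absurd hle (Nat.not_le.mpr (G.key_split hu hw hwu ha ha' hcl hau hA hA'))
  · have hA' : G.Adj a' u := by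
      by_contra h
      exact hiff ⟨fun h' => absurd h' hA, fun h' => absurd h' h⟩
    exact absurd hle (Nat.not_le.mpr (G.key_split hu hw hwu ha' ha hcl.symm ha'u hA' hA))

end SimpleGraph

/-- If `X` is `C`-maximal and `C₁ ≠ C₂` are classes of `C(X)` each with at least two
elements, then the bipartite graph induced between them is complete or empty. -/
theorem classes_pair_homogeneous_of_cMaximal {V : Type*} [Fintype V] (G : SimpleGraph V)
    (X : Set V) (hX : G.CMaximal X) (C₁ C₂ : Set V)
    (h₁ : C₁ ∈ G.classes X) (h₂ : C₂ ∈ G.classes X) (hne : C₁ ≠ C₂)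
    (hc₁ : 2 ≤ C₁.ncard) (hc₂ : 2 ≤ C₂.ncard) :
    (∀ a ∈ C₁, ∀ b ∈ C₂, G.Adj a b) ∨ (∀ a ∈ C₁, ∀ b ∈ C₂, ¬ G.Adj a b) := by
  obtain ⟨p, hp, rfl⟩ := h₁
  obtain ⟨q, hq, rfl⟩ := h₂
  by_contra hcon
  push_neg at hcon
  obtain ⟨⟨a₀, ha₀, b₀, hb₀, hnadj⟩, a₁, ha₁, b₁, hb₁, hadj⟩ := hcon
  -- basic facts
  have hclA : ∀ a ∈ G.classOf X p, G.classOf X a = G.classOf X p :=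
    fun a ha => G.classOf_eq_of_mem ha
  have hclB : ∀ b ∈ G.classOf X q, G.classOf X b = G.classOf X q :=
    fun b hb => G.classOf_eq_of_mem hb
  have hdisj : ∀ a ∈ G.classOf X p, a ∉ G.classOf X q := by
    intro a ha h
    exact hne ((hclA a ha).symm.trans (hclB a h))
  -- second elements
  obtain ⟨wa, hwa, hwane⟩ := Set.exists_ne_of_one_lt_ncard (show 1 < (G.classOf X p).ncard by omega) a₀
  obtain ⟨wb, hwb, hwbne⟩ := Set.exists_ne_of_one_lt_ncard (show 1 < (G.classOf X q).ncard by omega) b₁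
  -- Step 1: a₀ ~ b₁
  have hb₁X : b₁ ∉ X := hb₁.1
  have ha₀X : a₀ ∉ X := ha₀.1
  have ha₁X : a₁ ∉ X := ha₁.1
  have hb₀X : b₀ ∉ X := hb₀.1
  have hwb' : wb ∈ G.classOf X b₁ := (hclB b₁ hb₁) ▸ hwb
  have step1 : G.Adj a₀ b₁ := by
    have := G.homog hX hb₁X hwb' hwbne ha₁X ha₀X
      ((hclA a₁ ha₁).trans (hclA a₀ ha₀).symm)
      (by rw [hclB b₁ hb₁]; exact hdisj a₁ ha₁)
    exact this.mp hadj
  -- Step 2: a₀ ~ b₀, contradiction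
  have hwa' : wa ∈ G.classOf X a₀ := (hclA a₀ ha₀) ▸ hwa
  have step2 : G.Adj b₀ a₀ := by
    have := G.homog hX ha₀X hwa' hwane hb₁X hb₀X
      ((hclB b₁ hb₁).trans (hclB b₀ hb₀).symm)
      (by rw [hclA a₀ ha₀]; intro h; exact hdisj b₁ h hb₁)
    exact this.mp step1.symm
  exact hnadj step2.symm
end

section
/- In a k-uniform hypergraph G, for any vertex v and any set B of at most k−1 vertices disjoint from the similarity class [v], the link (k−|B|)-graph of B restricted to [v] is either complete or empty. In particular, the subhypergraph induced by G on [v] is complete or empty. -/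
/-- Vertices `u` and `v` of a hypergraph with edge predicate `E` are *similar* if the
transposition `(u v)` maps the edge set to itself. -/
def Hypergraph.IsSim {V : Type*} [DecidableEq V] (E : Finset V → Prop) (u v : V) : Prop :=
  ∀ A : Finset V, E A ↔ E (A.image (Equiv.swap u v))

lemma sim_trans {V : Type*} [DecidableEq V] {E : Finset V → Prop} {v a a' : V}
    (h1 : Hypergraph.IsSim E v a) (h2 : Hypergraph.IsSim E v a') :
    Hypergraph.IsSim E a a' := by
  intro A
  by_cases haa : a = a'
  · subst haa; simp [Equiv.swap_self, Finset.image_id]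
  by_cases hav : a = v
  · subst hav; exact h2 A
  by_cases ha'v : a' = v
  · subst ha'v
    rw [Equiv.swap_comm]; exact h1 A
  have key : Equiv.swap a a' = (Equiv.swap v a) * (Equiv.swap v a') * (Equiv.swap v a) := by
    have h := Equiv.swap_apply_apply (Equiv.swap v a) v a'
    rw [Equiv.swap_apply_left,
      Equiv.swap_apply_of_ne_of_ne (ha'v : a' ≠ v) (Ne.symm haa : a' ≠ a),
      Equiv.swap_inv] at h
    exact h
  rw [(h1 A), (h2 _), (h1 _), key]
  simp [Finset.image_image, Function.comp]
  rfl

lemma image_swap_eq {V : Type*} [DecidableEq V] {S : Finset V} {a a' : V}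
    (ha : a ∈ S) (ha' : a' ∉ S) :
    S.image (Equiv.swap a a') = insert a' (S.erase a) := by
  ext x
  simp only [Finset.mem_image, Finset.mem_insert, Finset.mem_erase]
  constructor
  · rintro ⟨y, hy, rfl⟩
    rcases eq_or_ne y a with rfl | hya
    · simp
    rcases eq_or_ne y a' with rfl | hya'
    · exact absurd hy ha'
    rw [Equiv.swap_apply_of_ne_of_ne hya hya']
    exact Or.inr ⟨hya, hy⟩
  · rintro (rfl | ⟨hx, hxS⟩)
    · exact ⟨a, ha, by simp⟩
    · refine ⟨x, hxS, ?_⟩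
      rw [Equiv.swap_apply_of_ne_of_ne hx]
      rintro rfl; exact ha' hxS

lemma exchange {V : Type*} [DecidableEq V] {E : Finset V → Prop} {v : V} {B : Finset V}
    (hdisj : ∀ b ∈ B, ¬ Hypergraph.IsSim E v b) :
    ∀ n (A A' : Finset V), (A' \ A).card = n → A.card = A'.card →
      (∀ a ∈ A, Hypergraph.IsSim E v a) → (∀ a ∈ A', Hypergraph.IsSim E v a) →
      E (A ∪ B) → E (A' ∪ B) := by
  intro n
  induction n using Nat.strong_induction_on with
  | _ n ih =>
    intro A A' hn hcard hA hA' hE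
    rcases Nat.eq_zero_or_pos n with rfl | hpos
    · have hsub : A' ⊆ A := by
        rw [← Finset.sdiff_eq_empty_iff_subset]
        exact Finset.card_eq_zero.mp hn
      rw [Finset.eq_of_subset_of_card_le hsub hcard.le]
      exact hE
    · have hne : (A' \ A).Nonempty := Finset.card_pos.mp (hn ▸ hpos)
      obtain ⟨a', ha'⟩ := hne
      have ha'A' : a' ∈ A' := (Finset.mem_sdiff.mp ha').1
      have ha'A : a' ∉ A := (Finset.mem_sdiff.mp ha').2
      have hne2 : (A \ A').Nonempty := by
        rw [← Finset.card_pos, Finset.card_sdiff_comm hcard]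
        exact hn ▸ hpos
      obtain ⟨a, ha⟩ := hne2
      have haA : a ∈ A := (Finset.mem_sdiff.mp ha).1
      have haA' : a ∉ A' := (Finset.mem_sdiff.mp ha).2
      have ha'B : a' ∉ B := fun hb => hdisj a' hb (hA' a' ha'A')
      have haB : a ∉ B := fun hb => hdisj a hb (hA a haA)
      set A'' := insert a' (A.erase a) with hA''def
      have ha'notin : a' ∉ A.erase a := fun h => ha'A (Finset.mem_of_mem_erase h)
      have hcard'' : A''.card = A.card := by
        rw [hA''def, Finset.card_insert_of_notMem ha'notin,
          Finset.card_erase_of_mem haA]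
        have : 0 < A.card := Finset.card_pos.mpr ⟨a, haA⟩
        omega
      have hA''sim : ∀ x ∈ A'', Hypergraph.IsSim E v x := by
        intro x hx
        rcases Finset.mem_insert.mp hx with rfl | hx
        · exact hA' x ha'A'
        · exact hA x (Finset.mem_of_mem_erase hx)
      have hsimaa' : Hypergraph.IsSim E a a' := sim_trans (hA a haA) (hA' a' ha'A')
      have hE'' : E (A'' ∪ B) := by
        have h1 : E ((A ∪ B).image (Equiv.swap a a')) := (hsimaa' (A ∪ B)).mp hE
        have h2 : (A ∪ B).image (Equiv.swap a a') = A'' ∪ B := by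
          rw [image_swap_eq (Finset.mem_union_left B haA)
            (fun h => (Finset.mem_union.mp h).elim ha'A ha'B),
            Finset.erase_union_distrib, Finset.erase_eq_of_notMem haB,
            hA''def, Finset.insert_union]
        rwa [h2] at h1
      have hmeas : (A' \ A'').card < n := by
        rw [← hn]
        apply Finset.card_lt_card
        constructor
        · intro x hx
          rw [Finset.mem_sdiff] at hx ⊢
          refine ⟨hx.1, fun hxA => hx.2 ?_⟩
          rw [hA''def]
          rcases eq_or_ne x a with rfl | hxa
          · exact absurd hx.1 haA'
          · exact Finset.mem_insert_of_mem (Finset.mem_erase.mpr ⟨hxa, hxA⟩)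
        · intro hsub
          have : a' ∈ A' \ A'' := hsub (Finset.mem_sdiff.mpr ⟨ha'A', ha'A⟩)
          exact (Finset.mem_sdiff.mp this).2 (Finset.mem_insert_self _ _)
      exact ih _ hmeas A'' A' rfl (hcard'' ▸ hcard) hA''sim hA' hE''

/-- In a `k`-uniform hypergraph `G`, for a vertex `v` and a set `B` of at most
`k - 1` vertices disjoint from the similarity class `[v]`, the link-graph `G_B`
restricted to `[v]` is complete or empty: either every `(k - |B|)`-subset `A` of
`[v]` yields an edge `A ∪ B`, or none does.  (Taking `B = ∅` this says the induced
subhypergraph on `[v]` is complete or empty.) -/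
theorem hypergraph_link_on_simClass_complete_or_empty {V : Type*} [DecidableEq V]
    (k : ℕ) (E : Finset V → Prop) (hunif : ∀ A, E A → A.card = k) (v : V)
    (B : Finset V) (hB : B.card < k) (hdisj : ∀ b ∈ B, ¬ Hypergraph.IsSim E v b) :
    (∀ A : Finset V, A.card = k - B.card → (∀ a ∈ A, Hypergraph.IsSim E v a) →
        E (A ∪ B)) ∨
      (∀ A : Finset V, A.card = k - B.card → (∀ a ∈ A, Hypergraph.IsSim E v a) →
        ¬ E (A ∪ B)) := by
  by_cases h : ∃ A₀ : Finset V, A₀.card = k - B.card ∧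
      (∀ a ∈ A₀, Hypergraph.IsSim E v a) ∧ E (A₀ ∪ B)
  · left
    obtain ⟨A₀, hc₀, hs₀, hE₀⟩ := h
    intro A hc hs
    exact exchange hdisj _ A₀ A rfl (by rw [hc₀, hc]) hs₀ hs hE₀
  · right
    intro A hc hs hE
    exact h ⟨A, hc, hs, hE⟩
end
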